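/- Let S be an n×n complex matrix with every entry in {0, 1, −1} and with transpose Sᵀ = −S, with spectral decomposition S = ∑_r (i·λ_r)·F_r where λ_1,…,λ_m are distinct reals and F_1,…,F_m are Hermitian idempotents, and let a be an index (vertex). Then there exists t > 0 with exp(tS)·e_a = e_a if and only if for all indices r, s in the eigenvalue support of a (i.e. F_r·e_a ≠ 0 and F_s·e_a ≠ 0) with λ_s ≠ 0, the ratio λ_r/λ_s is rational. -/

import Mathlib

/-!
Because the `F r` are complete orthogonal idempotents, `F r * S = (i λ_r) • F r`, hence
`F r * exp(tS) = exp(i t λ_r) • F r` and `exp(tS) = ∑ exp(i t λ_r) • F r`. Applying `F r` shows that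
`exp(tS)` fixes `e_a` iff `exp(i t λ_r) = 1`, i.e. `t λ_r / 2π ∈ ℤ`, for every `r` in the eigenvalue
support of `a`. Such a `t > 0` exists iff all these `λ_r` are rational multiples of one nonzero
`λ_s`: one direction divides `t λ_r` by `t λ_s`, the other clears the denominators of the ratios.
-/

open Matrix
open scoped ComplexOrder

/-- The transition matrix `exp(tS)` of an oriented graph. -/
noncomputable def expT {n : ℕ} (S : Matrix (Fin n) (Fin n) ℂ) (t : ℝ) :
    Matrix (Fin n) (Fin n) ℂ :=
  NormedSpace.exp ((t : ℂ) • S)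

theorem NormedSpace.mul_exp_of_mul_eq_smul {𝕂 𝔸 : Type*} [RCLike 𝕂] [NormedRing 𝔸]
    [NormedAlgebra 𝕂 𝔸] [CompleteSpace 𝔸] {A B : 𝔸} {c : 𝕂} (h : B * A = c • B) :
    B * exp A = exp c • B := by
  have hpow (k : ℕ) : B * A ^ k = c ^ k • B := by
    induction k with
    | zero => simp
    | succ k ih => rw [pow_succ, ← mul_assoc, ih, smul_mul_assoc, h, smul_smul, pow_succ]
  rw [exp_eq_tsum 𝕂, exp_eq_tsum 𝕂, ← (expSeries_summable' (𝕂 := 𝕂) A).tsum_mul_left B,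
    ← (expSeries_summable' (𝕂 := 𝕂) c).tsum_smul_const B]
  simp_rw [mul_smul_comm, hpow, smul_smul, smul_eq_mul]

theorem OrthogonalIdempotents.mul_sum_smul {ι K A : Type*} [Fintype ι] [CommSemiring K]
    [Semiring A] [Algebra K A] {e : ι → A} (he : OrthogonalIdempotents e) (z : ι → K) (r : ι) :
    e r * ∑ s, z s • e s = z r • e r := by
  classical
  simp_rw [Finset.mul_sum, mul_smul_comm, he.mul_eq, smul_ite, smul_zero, Finset.sum_ite_eq,
    Finset.mem_univ, if_true]

namespace Matrix

variable {ι n : Type*} [Fintype ι] [Fintype n] [DecidableEq n]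

theorem sum_smul_mulVec_eq_self_iff {K : Type*} [Field K] {F : ι → Matrix n n K}
    (hF : CompleteOrthogonalIdempotents F) (z : ι → K) (v : n → K) :
    (∑ r, z r • F r) *ᵥ v = v ↔ ∀ r, F r *ᵥ v ≠ 0 → z r = 1 := by
  constructor
  · intro hv r hr
    have hproj : z r • (F r *ᵥ v) = F r *ᵥ v := by
      rw [← smul_mulVec, ← hF.mul_sum_smul, ← mulVec_mulVec, hv]
    have hzero : (z r - 1) • (F r *ᵥ v) = 0 := by rw [sub_smul, one_smul, hproj, sub_self]
    exact sub_eq_zero.1 ((smul_eq_zero.1 hzero).resolve_right hr)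
  · intro hz
    conv_rhs => rw [← one_mulVec v, ← hF.complete, sum_mulVec]
    rw [sum_mulVec]
    refine Finset.sum_congr rfl fun r _ => ?_
    by_cases hr : F r *ᵥ v = 0
    · rw [smul_mulVec, hr, smul_zero]
    · rw [hz r hr, one_smul]

theorem exp_sum_smul {F : ι → Matrix n n ℂ} (hF : CompleteOrthogonalIdempotents F) (c : ι → ℂ) :
    NormedSpace.exp (∑ r, c r • F r) = ∑ r, Complex.exp (c r) • F r := by
  -- `NormedSpace.exp` does not depend on the norm; one is chosen only to apply the lemma above.
  let : NormedRing (Matrix n n ℂ) := Matrix.linftyOpNormedRing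
  let : NormedAlgebra ℂ (Matrix n n ℂ) := Matrix.linftyOpNormedAlgebra
  rw [← one_mul (NormedSpace.exp _), ← hF.complete, Finset.sum_mul]
  refine Finset.sum_congr rfl fun r _ => ?_
  rw [Complex.exp_eq_exp_ℂ]
  exact NormedSpace.mul_exp_of_mul_eq_smul (hF.mul_sum_smul c r)

end Matrix

open Real Complex in
theorem Complex.exp_ofReal_mul_I_mul_ofReal_eq_one_iff (t x : ℝ) :
    exp (t * (I * x)) = 1 ↔ ∃ k : ℤ, t / (2 * π) * x = k := by
  rw [exp_eq_one_iff]
  refine exists_congr fun k => ?_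
  have hlhs : (t : ℂ) * (I * x) = ((t * x : ℝ) : ℂ) * I := by push_cast; ring
  have hrhs : (k : ℂ) * (2 * π * I) = ((2 * π * k : ℝ) : ℂ) * I := by push_cast; ring
  rw [hlhs, hrhs, mul_left_inj' I_ne_zero, ofReal_inj, div_mul_eq_mul_div,
    div_eq_iff (by positivity), mul_comm (k : ℝ)]

theorem Rat.exists_pos_nat_forall_mul_eq_int {ι : Type*} [Fintype ι] (q : ι → ℚ) :
    ∃ N : ℕ, 0 < N ∧ ∀ r, ∃ k : ℤ, N * q r = k := by
  refine ⟨∏ r, (q r).den, Finset.prod_pos fun r _ => (q r).den_pos, fun r => ?_⟩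
  obtain ⟨c, hc⟩ := Finset.dvd_prod_of_mem (fun r => (q r).den) (Finset.mem_univ r)
  refine ⟨c * (q r).num, ?_⟩
  rw [hc]
  push_cast
  rw [mul_right_comm, Rat.den_mul_eq_num, mul_comm]

theorem exists_pos_forall_mul_eq_int_iff {ι : Type*} [Fintype ι] (p : ι → Prop) (x : ι → ℝ) :
    (∃ t : ℝ, 0 < t ∧ ∀ r, p r → ∃ k : ℤ, t * x r = k) ↔
      ∀ r s, p r → p s → x s ≠ 0 → ∃ q : ℚ, x r / x s = q := by
  constructor
  · rintro ⟨t, ht, hint⟩ r s hr hs -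
    obtain ⟨kr, hkr⟩ := hint r hr
    obtain ⟨ks, hks⟩ := hint s hs
    refine ⟨kr / ks, ?_⟩
    rw [← mul_div_mul_left (x r) (x s) ht.ne', hkr, hks]
    push_cast
    rfl
  · intro hrat
    by_cases hzero : ∀ r, p r → x r = 0
    · exact ⟨1, one_pos, fun r hr => ⟨0, by simp [hzero r hr]⟩⟩
    push Not at hzero
    obtain ⟨s, hs, hxs⟩ := hzero
    choose! q hq using fun r hr => hrat r s hr hs hxs
    obtain ⟨N, hN, hNq⟩ := Rat.exists_pos_nat_forall_mul_eq_int q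
    have hperiod (r : ι) (hr : p r) : ∃ k : ℤ, N / x s * x r = k := by
      obtain ⟨k, hk⟩ := hNq r
      refine ⟨k, ?_⟩
      rw [div_mul_comm, hq r hr, mul_comm]
      exact_mod_cast hk
    refine ⟨|N / x s|, abs_pos.2 (div_ne_zero (by positivity) hxs), fun r hr => ?_⟩
    obtain ⟨k, hk⟩ := hperiod r hr
    rcases abs_choice (N / x s : ℝ) with habs | habs <;> rw [habs]
    · exact ⟨k, hk⟩
    · exact ⟨-k, by push_cast; rw [neg_mul, hk]⟩

open Real Complex in
theorem exists_pos_forall_exp_eq_one_iff {ι : Type*} (p : ι → Prop) (x : ι → ℝ) :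
    (∃ t : ℝ, 0 < t ∧ ∀ r, p r → exp (t * (I * x r)) = 1) ↔
      ∃ t : ℝ, 0 < t ∧ ∀ r, p r → ∃ k : ℤ, t * x r = k := by
  simp_rw [exp_ofReal_mul_I_mul_ofReal_eq_one_iff]
  constructor
  · rintro ⟨t, ht, h⟩
    exact ⟨t / (2 * π), by positivity, h⟩
  · rintro ⟨t, ht, h⟩
    refine ⟨2 * π * t, by positivity, ?_⟩
    rwa [mul_div_cancel_left₀ t (by positivity : (2 * π : ℝ) ≠ 0)]

theorem stmt_18_general {n m : ℕ}
    (S : Matrix (Fin n) (Fin n) ℂ)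
    (lam : Fin m → ℝ)
    (F : Fin m → Matrix (Fin n) (Fin n) ℂ)
    (hFmul : ∀ r s : Fin m, F r * F s = if r = s then F r else 0)
    (hFsum : ∑ r, F r = 1)
    (hspec : S = ∑ r, (Complex.I * (lam r : ℂ)) • F r)
    (a : Fin n) :
    (∃ t : ℝ, 0 < t ∧ expT S t *ᵥ Pi.single a 1 = Pi.single a 1) ↔
      (∀ r s : Fin m, F r *ᵥ Pi.single a 1 ≠ 0 → F s *ᵥ Pi.single a 1 ≠ 0 →
        lam s ≠ 0 → ∃ q : ℚ, lam r / lam s = (q : ℝ)) := by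
  have hF : CompleteOrthogonalIdempotents F := ⟨OrthogonalIdempotents.iff_mul_eq.2 hFmul, hFsum⟩
  have hexpT (t : ℝ) : expT S t = ∑ r, Complex.exp (t * (Complex.I * lam r)) • F r := by
    rw [expT, hspec, Finset.smul_sum]
    simp_rw [smul_smul]
    exact exp_sum_smul hF _
  simp_rw [hexpT, sum_smul_mulVec_eq_self_iff hF]
  rw [exists_pos_forall_exp_eq_one_iff, exists_pos_forall_mul_eq_int_iff]

/-- Let `S` be the adjacency matrix of an oriented graph
(entries in `{0,1,−1}`, `Sᵀ = −S`) with spectral decomposition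
`S = ∑ (i·λ_r) • F_r`, and let `a` be a vertex. Then `exp(tS)·e_a = e_a` for
some `t > 0` if and only if `λ_r/λ_s` is rational for all `r`, `s` in the
eigenvalue support of `a` with `λ_s ≠ 0`. -/
theorem stmt_18 {n m : ℕ} (hn : 1 ≤ n)
    (S : Matrix (Fin n) (Fin n) ℂ)
    (hS01 : ∀ i j, S i j = 0 ∨ S i j = 1 ∨ S i j = -1)
    (hSskew : Sᵀ = -S)
    (lam : Fin m → ℝ) (hlam : Function.Injective lam)
    (F : Fin m → Matrix (Fin n) (Fin n) ℂ)
    (hF0 : ∀ r, F r ≠ 0)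
    (hFherm : ∀ r, (F r).IsHermitian)
    (hFmul : ∀ r s : Fin m, F r * F s = if r = s then F r else 0)
    (hFsum : ∑ r, F r = 1)
    (hspec : S = ∑ r, (Complex.I * (lam r : ℂ)) • F r)
    (a : Fin n) :
    (∃ t : ℝ, 0 < t ∧ expT S t *ᵥ Pi.single a 1 = Pi.single a 1) ↔
      (∀ r s : Fin m, F r *ᵥ Pi.single a 1 ≠ 0 → F s *ᵥ Pi.single a 1 ≠ 0 →
        lam s ≠ 0 → ∃ q : ℚ, lam r / lam s = (q : ℝ)) :=
  stmt_18_general S lam F hFmul hFsum hspec a
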